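/- arXiv:0909.2430 — 5 statements merged into one kernel-verified Lean document; each statement's English description precedes it below -/
import Mathlib

section
/- Let G be a totally ordered abelian group (written multiplicatively), let g ∈ G, and let α = {a₁,…,aₙ} be a finite subset of elements all strictly less than the identity 1. Then there exists a finite set μ of elements of G all strictly less than 1, and an element of the form μ^m (a product of integer powers of elements of μ), such that the set g·α* (where α* is the submonoid generated by α) is contained in the set {μ^k : k ∈ ℤⁿ, k ≥ m componentwise}. -/
/-!
Every `g ≠ 1` is `g¹` or `(g⁻¹)⁻¹`, whichever base is below `1`, so `{g}` lies in a grid with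
at most one ratio; `α*` lies in the grid with ratios `α` and offsets `0`; and products of
elements of two grids lie in the grid obtained by concatenating ratios and offsets.
-/

/-- The grid `J^{μ,m}` generated by ratios `μ : Fin k → G` with offsets `m : Fin k → ℤ`:
all products `∏ μᵢ^{cᵢ}` with `cᵢ ≥ mᵢ`. -/
def grid {G : Type*} [CommGroup G] {k : ℕ} (μ : Fin k → G) (m : Fin k → ℤ) : Set G :=
  {h | ∃ c : Fin k → ℤ, (∀ i, m i ≤ c i) ∧ h = ∏ i, μ i ^ c i}

section Grid

variable {G : Type*} [CommGroup G]

lemma mul_mem_grid_add {k : ℕ} {μ : Fin k → G} {m n : Fin k → ℤ} {x y : G}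
    (hx : x ∈ grid μ m) (hy : y ∈ grid μ n) : x * y ∈ grid μ (m + n) := by
  obtain ⟨c, hmc, rfl⟩ := hx
  obtain ⟨d, hnd, rfl⟩ := hy
  exact ⟨c + d, fun i => add_le_add (hmc i) (hnd i), by
    simp only [Pi.add_apply, zpow_add, Finset.prod_mul_distrib]⟩

lemma mul_mem_grid_append {k l : ℕ} {μ : Fin k → G} {ν : Fin l → G} {m : Fin k → ℤ}
    {n : Fin l → ℤ} {x y : G} (hx : x ∈ grid μ m) (hy : y ∈ grid ν n) :
    x * y ∈ grid (Fin.append μ ν) (Fin.append m n) := by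
  obtain ⟨c, hmc, rfl⟩ := hx
  obtain ⟨d, hnd, rfl⟩ := hy
  refine ⟨Fin.append c d, fun i => Fin.addCases (by simpa using hmc) (by simpa using hnd) i, ?_⟩
  simp only [Fin.prod_univ_add, Fin.append_left, Fin.append_right]

lemma submonoidClosure_subset_grid_zero (α : Finset G) :
    (Submonoid.closure (α : Set G) : Set G) ⊆ grid (fun i => (α.equivFin.symm i : G)) 0 := by
  intro x hx
  induction hx using Submonoid.closure_induction with
  | mem a ha =>
      refine ⟨Pi.single (α.equivFin ⟨a, ha⟩) 1, fun i => ?_, ?_⟩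
      · by_cases hi : i = α.equivFin ⟨a, ha⟩ <;> simp [hi]
      · simp [Pi.single_apply, apply_ite, Finset.prod_ite_eq']
  | one => exact ⟨0, fun _ => le_rfl, by simp⟩
  | mul a b _ _ ha hb => simpa using mul_mem_grid_add ha hb

lemma exists_mem_grid_of_lt_one [LinearOrder G] [IsOrderedMonoid G] (g : G) :
    ∃ (k : ℕ) (μ : Fin k → G) (m : Fin k → ℤ), (∀ i, μ i < 1) ∧ g ∈ grid μ m := by
  rcases lt_trichotomy g 1 with hg | rfl | hg
  · exact ⟨1, ![g], ![1], fun _ => by simpa using hg, ![1], fun _ => le_rfl, by simp⟩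
  · exact ⟨0, ![], ![], fun i => i.elim0, ![], fun i => i.elim0, by simp⟩
  · exact ⟨1, ![g⁻¹], ![-1], fun _ => by simpa using hg, ![-1], fun _ => le_rfl, by simp⟩

end Grid

/-- If `g ∈ G` and `α` is a finite set of elements `< 1`, then `g·α*` is contained in some
grid `J^{μ,m}` with `μ` a finite set of elements `< 1`. -/
theorem stmt0 {G : Type*} [CommGroup G] [LinearOrder G] [IsOrderedMonoid G] (g : G) (α : Finset G)
    (hα : ∀ x ∈ α, x < 1) :
    ∃ (k : ℕ) (μ : Fin k → G) (m : Fin k → ℤ),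
      (∀ i, μ i < 1) ∧
      (fun x => g * x) '' (Submonoid.closure (α : Set G) : Set G) ⊆ grid μ m := by
  obtain ⟨k, μ, m, hμ, hg⟩ := exists_mem_grid_of_lt_one g
  refine ⟨k + α.card, Fin.append μ (fun i => (α.equivFin.symm i : G)), Fin.append m 0,
    Fin.addCases (by simpa using hμ) (fun j => by simpa using hα _ (α.equivFin.symm j).2), ?_⟩
  rintro _ ⟨y, hy, rfl⟩
  exact mul_mem_grid_append hg (submonoidClosure_subset_grid_zero α hy)
end

section
/- (Subgrid Witness Theorem) Let G be a totally ordered abelian group, μ = {μ₁,…,μₙ} a finite set of elements of G strictly less than 1, and A a nonempty subset of a grid J^{μ,m}. If A has a maximum element g, then there exists a finite set α of elements of the subgroup generated by μ, each strictly less than 1, such that A ⊆ g·α*, where α* is the submonoid generated by α. -/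
section Products

variable {ι G : Type*} [Fintype ι] [CommGroup G] (μ : ι → G)

lemma prod_zpow_add_natCast (b : ι → ℤ) (e f : ι → ℕ) :
    ∏ i, μ i ^ (b i + ((e i + f i : ℕ) : ℤ)) =
      (∏ i, μ i ^ (b i + (e i : ℤ))) * ∏ i, μ i ^ f i := by
  simp only [Nat.cast_add, ← add_assoc, zpow_add, zpow_natCast, Finset.prod_mul_distrib]

lemma prod_pow_mem_closure_range (e : ι → ℕ) :
    ∏ i, μ i ^ e i ∈ Submonoid.closure (Set.range μ) :=
  Submonoid.prod_mem _ fun i _ => pow_mem (Submonoid.subset_closure (Set.mem_range_self i)) _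

lemma prod_zpow_mem_closure_range (k : ι → ℤ) :
    ∏ i, μ i ^ k i ∈ Subgroup.closure (Set.range μ) :=
  Subgroup.prod_mem _ fun i _ => zpow_mem (Subgroup.subset_closure (Set.mem_range_self i)) _

end Products

section Grid

variable {G : Type*} [CommGroup G] {n : ℕ} (μ : Fin n → G)

lemma mem_grid_iff {b : Fin n → ℤ} {x : G} :
    x ∈ grid μ b ↔ ∃ e : Fin n → ℕ, x = ∏ i, μ i ^ (b i + (e i : ℤ)) := by
  constructor
  · rintro ⟨k, hk, rfl⟩
    refine ⟨fun i => (k i - b i).toNat, Finset.prod_congr rfl fun i _ => ?_⟩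
    have := hk i
    dsimp only
    congr 1
    omega
  · rintro ⟨e, rfl⟩
    exact ⟨_, fun i => by omega, rfl⟩

lemma inv_prod_zpow_mul_mem_grid {m : Fin n → ℤ} {x : G} (hx : x ∈ grid μ m) (d : Fin n → ℤ) :
    (∏ i, μ i ^ d i)⁻¹ * x ∈ grid μ (m - d) := by
  obtain ⟨c, hc, rfl⟩ := hx
  refine ⟨c - d, fun i => sub_le_sub_right (hc i) _, ?_⟩
  rw [← Finset.prod_inv_distrib, ← Finset.prod_mul_distrib]
  exact Finset.prod_congr rfl fun i _ => by rw [Pi.sub_apply, zpow_sub, mul_comm]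

variable [PartialOrder G] [IsOrderedMonoid G]

def leOneExponentIdeal (hμ : ∀ i, μ i ≤ 1) (b : Fin n → ℤ) : AddSemigroupIdeal (Fin n → ℕ) where
  carrier := {e | ∏ i, μ i ^ (b i + (e i : ℤ)) ≤ 1}
  vadd_mem' f e he := by
    rw [Set.mem_ofPred_eq, vadd_eq_add, add_comm, Pi.add_def, prod_zpow_add_natCast]
    exact mul_le_one' he (Finset.prod_le_one' fun i _ => pow_le_one' (hμ i) _)

theorem exists_finset_forall_mem_grid_le_one (hμ : ∀ i, μ i < 1) (b : Fin n → ℤ) :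
    ∃ α : Finset G, (∀ x ∈ α, x < 1) ∧
      (α : Set G) ⊆ (Subgroup.closure (Set.range μ) : Set G) ∧
      ∀ x ∈ grid μ b, x ≤ 1 → x ∈ Submonoid.closure (α : Set G) := by
  classical
  obtain ⟨s, hs⟩ := AddSemigroupIdeal.fg_iff.1
    (AddSemigroupIdeal.fg_of_wellQuasiOrderedLE (leOneExponentIdeal μ (fun i => (hμ i).le) b))
  set α := (s.image fun e => ∏ i, μ i ^ (b i + (e i : ℤ))).filter (· < 1) ∪ Finset.univ.image μ
  have mem_α : ∀ {x}, x ∈ α ↔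
      ((∃ e ∈ s, ∏ i, μ i ^ (b i + (e i : ℤ)) = x) ∧ x < 1) ∨ ∃ i, μ i = x := by
    intro x
    simp only [α, Finset.mem_union, Finset.mem_filter, Finset.mem_image, Finset.mem_univ, true_and]
  refine ⟨α, ?_, ?_, ?_⟩
  · rintro x hx
    rcases mem_α.1 hx with ⟨-, hx1⟩ | ⟨i, rfl⟩
    exacts [hx1, hμ i]
  · rintro x hx
    rcases mem_α.1 hx with ⟨⟨e, -, rfl⟩, -⟩ | ⟨i, rfl⟩
    exacts [prod_zpow_mem_closure_range μ _, Subgroup.subset_closure (Set.mem_range_self i)]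
  · rintro x hx hx1
    obtain ⟨e, rfl⟩ := (mem_grid_iff μ).1 hx
    have he : e ∈ AddSemigroupIdeal.closure (s : Set (Fin n → ℕ)) := hs ▸ hx1
    obtain ⟨f, z, hz, rfl⟩ := AddSemigroupIdeal.mem_closure''.1 he
    rw [add_comm, Pi.add_def, prod_zpow_add_natCast]
    refine mul_mem ?_ (Submonoid.closure_mono ?_ (prod_pow_mem_closure_range μ f))
    · have hz1 : z ∈ leOneExponentIdeal μ (fun i => (hμ i).le) b := hs ▸ AddSemigroupIdeal.subset_closure hz
      rcases (show ∏ i, μ i ^ (b i + (z i : ℤ)) ≤ 1 from hz1).lt_or_eq with hlt | heq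
      · exact Submonoid.subset_closure (mem_α.2 (.inl ⟨⟨z, hz, rfl⟩, hlt⟩))
      · rw [heq]
        exact one_mem _
    · rintro _ ⟨i, rfl⟩
      exact mem_α.2 (.inr ⟨i, rfl⟩)

end Grid

/-- Subgrid Witness Theorem: if `A` is a nonempty subset of a grid `J^{μ,m}` with maximum
element `g`, then there is a finite set `α` of elements of the subgroup generated by `μ`,
each `< 1`, with `A ⊆ g·α*`. -/
theorem stmt2 {G : Type*} [CommGroup G] [LinearOrder G] [IsOrderedMonoid G]
    {n : ℕ} (μ : Fin n → G) (hμ : ∀ i, μ i < 1) (m : Fin n → ℤ)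
    (A : Set G) (hA : A ⊆ grid μ m) (g : G) (hgA : g ∈ A) (hmax : ∀ a ∈ A, a ≤ g) :
    ∃ α : Finset G,
      (∀ x ∈ α, x < 1) ∧
      (α : Set G) ⊆ (Subgroup.closure (Set.range μ) : Set G) ∧
      A ⊆ (fun x => g * x) '' (Submonoid.closure (α : Set G) : Set G) := by
  obtain ⟨d, -, hgd⟩ := hA hgA
  obtain ⟨α, hα_lt, hα_sub, hα⟩ := exists_finset_forall_mem_grid_le_one μ hμ (m - d)
  refine ⟨α, hα_lt, hα_sub, fun a ha => ⟨g⁻¹ * a, hα _ ?_ ?_, mul_inv_cancel_left g a⟩⟩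
  · rw [hgd]
    exact inv_prod_zpow_mul_mem_grid μ (hA ha) d
  · exact inv_mul_le_one_iff.2 (hmax a ha)
end

section
/- There is no finite set μ of small monomials (elements strictly less than 1 in the ordered group of monomials x^r, r ∈ ℝ, ordered so that x^r < 1 iff r < 0) such that the set A = {x^{-1/2}, x^{-2/3}, x^{-3/4}, …} = {x^{-n/(n+1)} : n ≥ 1} satisfies A ⊆ μ⁺ (i.e., every element of A is a nonempty product of elements of μ). Equivalently: for the ordered group ℝ under addition, there is no finite set μ of negative reals such that every number -n/(n+1) (n ≥ 1) is a finite sum of elements of μ. -/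
/-- `μ⁺` additively: the set of finite nonempty sums of elements of `s`. -/
def addPlus (s : Set ℝ) : Set ℝ :=
  {x | ∃ a ∈ s, ∃ b ∈ AddSubmonoid.closure s, x = a + b}

/-!
In an Archimedean ordered group, a sum of elements of a finite set of negative elements that
stays above a bound `c` can use each generator only boundedly often, so the submonoid generated
by such a set meets `[c, ∞)` in a finite set. The numbers `-n/(n+1)` are pairwise distinct and
all lie above `-1`, so they cannot all be sums of elements of `μ`.
-/

open Set

namespace AddSubmonoid

variable {G : Type*} [AddCommGroup G] [LinearOrder G] [IsOrderedAddMonoid G]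

theorem nonpos_of_mem_closure {s : Set G} (hs : ∀ x ∈ s, x ≤ 0) {x : G}
    (hx : x ∈ closure s) : x ≤ 0 :=
  closure_induction hs le_rfl (fun _ _ _ _ => add_nonpos) hx

variable [Archimedean G]

theorem finite_closure_singleton_inter_Ici {a : G} (ha : a < 0) (c : G) :
    ((closure {a} : Set G) ∩ Ici c).Finite := by
  obtain ⟨N, hN⟩ := Archimedean.arch (-c) (neg_pos.mpr ha)
  refine ((Finset.range (N + 1)).finite_toSet.image (· • a)).subset ?_
  rintro _ ⟨hy, hn⟩
  obtain ⟨n, rfl⟩ := mem_closure_singleton.mp hy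
  refine ⟨n, Finset.mem_range_succ_iff.mpr ?_, rfl⟩
  rw [← nsmul_le_nsmul_iff_left (neg_pos.mpr ha), neg_nsmul]
  exact (_root_.neg_le_neg hn).trans hN

theorem finite_closure_inter_Ici (s : Finset G) (hs : ∀ x ∈ s, x < 0) (c : G) :
    ((closure (s : Set G) : Set G) ∩ Ici c).Finite := by
  classical
  induction s using Finset.induction_on with
  | empty => simpa using (finite_singleton 0).subset inter_subset_left
  | insert a s _ ih =>
    have ha : a < 0 := hs a (Finset.mem_insert_self a s)
    have hs' : ∀ x ∈ s, x < 0 := fun x hx => hs x (Finset.mem_insert_of_mem hx)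
    refine ((finite_closure_singleton_inter_Ici ha c).image2 (· + ·) (ih hs')).subset ?_
    rintro x ⟨hx, hcx⟩
    rw [Finset.coe_insert, insert_eq, SetLike.mem_coe, closure_union, mem_sup] at hx
    obtain ⟨y, hy, z, hz, rfl⟩ := hx
    have hy0 : y ≤ 0 := nonpos_of_mem_closure (by simpa using ha.le) hy
    have hz0 : z ≤ 0 := nonpos_of_mem_closure (fun x hx => (hs' x hx).le) hz
    exact ⟨y, ⟨hy, hcx.trans (add_le_of_nonpos_right hz0)⟩,
      z, ⟨hz, hcx.trans (add_le_of_nonpos_left hy0)⟩, rfl⟩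

end AddSubmonoid

theorem addPlus_subset_closure (s : Set ℝ) : addPlus s ⊆ AddSubmonoid.closure s := by
  rintro _ ⟨a, ha, b, hb, rfl⟩
  exact add_mem (AddSubmonoid.subset_closure ha) hb

theorem neg_div_add_one_injective :
    Function.Injective fun n : ℕ => -((n : ℝ) / ((n : ℝ) + 1)) := by
  intro m n h
  rw [neg_inj, div_eq_div_iff (by positivity) (by positivity)] at h
  exact_mod_cast (by linear_combination h : (m : ℝ) = n)

/-- There is no finite set `μ` of negative reals such that every number `-n/(n+1)` (n ≥ 1)
is a finite nonempty sum of elements of `μ`. -/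
theorem stmt8 (μ : Finset ℝ) (hμ : ∀ x ∈ μ, x < 0) :
    ¬ (∀ n : ℕ, 1 ≤ n → (-((n : ℝ) / ((n : ℝ) + 1))) ∈ addPlus (μ : Set ℝ)) := by
  intro h
  have hmem : ∀ n : ℕ,
      -((n : ℝ) / ((n : ℝ) + 1)) ∈ (AddSubmonoid.closure (μ : Set ℝ) : Set ℝ) ∩ Ici (-1) := by
    intro n
    refine ⟨?_, ?_⟩
    · rcases Nat.eq_zero_or_pos n with rfl | hn
      · simp
      · exact addPlus_subset_closure _ (h n hn)
    · rw [mem_Ici, neg_le_neg_iff, div_le_one (by positivity)]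
      linarith
  exact infinite_of_injective_forall_mem neg_div_add_one_injective hmem
    (AddSubmonoid.finite_closure_inter_Ici μ hμ (-1))
end

section
/- Let G be a totally ordered abelian group, μ a finite set of elements strictly less than 1, and J^{μ,m} a grid. For any infinite sequence g₁, g₂, g₃, … of distinct elements of J^{μ,m}, there exist indices i < j with gⱼ ∈ gᵢ·μ⁺ (i.e., gⱼ ≺^μ gᵢ). In particular, every grid is well-ordered under the reverse of the group order restricted to it (no infinite strictly increasing sequence). -/
/-- `μ⁺`: the set of nonempty products of elements of `s`. -/
def mulPlus {G : Type*} [CommMonoid G] (s : Set G) : Set G :=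
  {x | ∃ a ∈ s, ∃ b ∈ Submonoid.closure s, x = a * b}

/-! Record each term of the sequence by an exponent vector `c k ≥ m`. By Dickson's lemma some
`c i ≤ c j` with `i < j`, so `g j = g i * ∏ μᵢ ^ (c j - c i)` with nonnegative exponents, not all
zero since `g i ≠ g j`; that product lies in `μ⁺`. As every element of `μ⁺` is `< 1`, this
forces `g j < g i`, which rules out a strictly increasing sequence. -/

theorem BddBelow.isPWO_pi {ι α : Type*} [Finite ι] [LinearOrder α] [LocallyFiniteOrder α]
    {s : Set (ι → α)} (hs : BddBelow s) : s.IsPWO := by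
  obtain ⟨m, hm⟩ := hs
  exact (Set.IsPWO.pi fun i => (bddBelow_Ici (a := m i)).isWF.isPWO).mono
    fun x hx i _ => hm hx i

theorem zpow_mem_closure_range {G ι : Type*} [Group G] (μ : ι → G) (i : ι) {k : ℤ}
    (hk : 0 ≤ k) : μ i ^ k ∈ Submonoid.closure (Set.range μ) := by
  lift k to ℕ using hk
  rw [zpow_natCast]
  exact pow_mem (Submonoid.subset_closure (Set.mem_range_self i)) k

theorem prod_zpow_mem_mulPlus {G ι : Type*} [CommGroup G] [Fintype ι] [DecidableEq ι]
    (μ : ι → G) {e : ι → ℤ} (he : 0 ≤ e) (he' : e ≠ 0) :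
    (∏ i, μ i ^ e i) ∈ mulPlus (Set.range μ) := by
  obtain ⟨i₀, hi₀⟩ := Function.ne_iff.mp he'
  have hpos : 0 < e i₀ := lt_of_le_of_ne (he i₀) (Ne.symm hi₀)
  refine ⟨μ i₀, Set.mem_range_self i₀,
    μ i₀ ^ (e i₀ - 1) * ∏ i ∈ Finset.univ.erase i₀, μ i ^ e i, ?_, ?_⟩
  · exact mul_mem (zpow_mem_closure_range μ i₀ (by omega))
      (prod_mem fun i _ => zpow_mem_closure_range μ i (he i))
  · rw [← Finset.mul_prod_erase Finset.univ _ (Finset.mem_univ i₀), ← mul_assoc, ← zpow_one_add,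
      add_sub_cancel]

theorem le_one_of_mem_closure {M : Type*} [CommMonoid M] [Preorder M] [IsOrderedMonoid M]
    {s : Set M} (hs : ∀ x ∈ s, x ≤ 1) {b : M} (hb : b ∈ Submonoid.closure s) : b ≤ 1 := by
  induction hb using Submonoid.closure_induction with
  | mem x hx => exact hs x hx
  | one => exact le_rfl
  | mul x y _ _ hx hy => exact mul_le_one' hx hy

theorem lt_one_of_mem_mulPlus {G : Type*} [CommGroup G] [Preorder G] [IsOrderedMonoid G]
    {s : Set G} (hs : ∀ x ∈ s, x < 1) {p : G} (hp : p ∈ mulPlus s) : p < 1 := by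
  obtain ⟨a, ha, b, hb, rfl⟩ := hp
  exact mul_lt_one_of_lt_of_le (hs a ha) (le_one_of_mem_closure (fun x hx => (hs x hx).le) hb)

namespace grid

variable {G : Type*} [CommGroup G] {n : ℕ} {μ : Fin n → G} {m : Fin n → ℤ}

theorem exists_lt_eq_mul_mulPlus {g : ℕ → G} (hg : Function.Injective g)
    (hmem : ∀ k, g k ∈ grid μ m) :
    ∃ i j : ℕ, i < j ∧ ∃ p ∈ mulPlus (Set.range μ), g j = g i * p := by
  choose c hcm hgc using hmem
  obtain ⟨i, j, hij, hcij⟩ : ∃ i j, i < j ∧ c i ≤ c j :=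
    (BddBelow.isPWO_pi (s := Set.range c) ⟨m, by rintro _ ⟨k, rfl⟩; exact hcm k⟩).exists_lt
      (Set.mem_range_self ·)
  have hgj : g j = g i * ∏ x, μ x ^ (c j x - c i x) := by
    rw [hgc i, hgc j, ← Finset.prod_mul_distrib]
    exact Finset.prod_congr rfl fun x _ => by rw [← zpow_add, add_sub_cancel]
  have hne : c j - c i ≠ 0 := fun h => hg.ne hij.ne <| by
    rw [hgc i, hgc j, sub_eq_zero.mp h]
  exact ⟨i, j, hij, _, prod_zpow_mem_mulPlus μ (sub_nonneg.mpr hcij) hne, hgj⟩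

theorem not_strictMono [LinearOrder G] [IsOrderedMonoid G] (hμ : ∀ i, μ i < 1) {g : ℕ → G}
    (hmem : ∀ k, g k ∈ grid μ m) : ¬ StrictMono g := fun hmono => by
  obtain ⟨i, j, hij, p, hp, hgj⟩ := exists_lt_eq_mul_mulPlus hmono.injective hmem
  have hp1 : p < 1 := lt_one_of_mem_mulPlus (by rintro _ ⟨y, rfl⟩; exact hμ y) hp
  exact (hmono hij).not_ge (hgj ▸ mul_le_of_le_one_right' hp1.le)

end grid

/-- In any infinite sequence of distinct elements of a grid, some later term is obtained
from an earlier one by multiplying by a nonempty product of ratios; in particular a grid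
contains no strictly increasing infinite sequence. -/
theorem stmt9 {G : Type*} [CommGroup G] [LinearOrder G] [IsOrderedMonoid G]
    {n : ℕ} (μ : Fin n → G) (hμ : ∀ i, μ i < 1) (m : Fin n → ℤ) :
    (∀ g : ℕ → G, Function.Injective g → (∀ k, g k ∈ grid μ m) →
      ∃ i j : ℕ, i < j ∧ ∃ p ∈ mulPlus (Set.range μ), g j = g i * p) ∧
    (∀ g : ℕ → G, (∀ k, g k ∈ grid μ m) → ¬ StrictMono g) :=
  ⟨fun _ hg hmem => grid.exists_lt_eq_mul_mulPlus hg hmem,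
    fun _ hmem => grid.not_strictMono hμ hmem⟩
end

section
/- For the set μ = {-1, -√2} of negative reals with μ* = {-j - k√2 : j,k ∈ ℕ}, there is no finite set α of negative reals such that for all j, k ∈ ℕ with j - k√2 < 0, the number j - k√2 lies in α⁺ (the set of finite nonempty sums of elements of α). In other words, the negative numbers of the form j - k√2 get arbitrarily close to 0, so cannot all be witnessed by one finite ratio set. -/
open Set

theorem Irrational.exists_nat_sub_nat_mul_mem_Ioo {ξ : ℝ} (hξ : Irrational ξ) (hξ₀ : 0 < ξ)
    {ε : ℝ} (hε : 0 < ε) : ∃ j k : ℕ, (j : ℝ) - k * ξ ∈ Ioo (-ε) 0 := by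
  have : Fact ((0 : ℝ) < 1) := ⟨one_pos⟩
  have hdense : DenseRange fun n : ℕ ↦ n • (ξ : AddCircle (1 : ℝ)) :=
    denseRange_zsmul_iff_nsmul.1 (AddCircle.denseRange_zsmul_coe_iff.2 (by rwa [div_one]))
  -- `min ε 1` keeps the integer part `j` of `k * ξ` nonnegative
  obtain ⟨k, t, ⟨ht₀, ht⟩, hkt⟩ := hdense.exists_mem_open
    (QuotientAddGroup.isOpenMap_coe _ isOpen_Ioo) ((nonempty_Ioo.2 (lt_min hε one_pos)).image _)
  rw [lt_min_iff] at ht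
  rw [← AddCircle.coe_nsmul, QuotientAddGroup.eq, AddSubgroup.mem_zmultiples_iff] at hkt
  obtain ⟨j, hj⟩ := hkt
  rw [zsmul_one, nsmul_eq_mul] at hj
  have hj₀ : 0 ≤ j := by
    have : (-1 : ℝ) < j := by linarith [mul_nonneg k.cast_nonneg hξ₀.le]
    have : (-1 : ℤ) < j := by exact_mod_cast this
    omega
  lift j to ℕ using hj₀
  push_cast at hj
  exact ⟨j, k, by linarith, by linarith⟩

theorem addPlus_subset_Iic {s : Set ℝ} {M : ℝ} (hs : ∀ x ∈ s, x ≤ M) (hM : M ≤ 0) :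
    addPlus s ⊆ Iic M := by
  rintro _ ⟨a, ha, b, hb, rfl⟩
  have hb₀ : b ≤ 0 := by
    induction hb using AddSubmonoid.closure_induction with
    | mem y hy => exact (hs y hy).trans hM
    | zero => rfl
    | add y z _ _ hy hz => linarith
  exact add_le_of_le_of_nonpos (hs a ha) hb₀

/-- There is no finite set `α` of negative reals such that every negative number of the
form `j - k√2` (j, k ∈ ℕ) is a finite nonempty sum of elements of `α`. -/
theorem stmt11 (α : Finset ℝ) (hα : ∀ x ∈ α, x < 0) :
    ¬ (∀ j k : ℕ, (j : ℝ) - (k : ℝ) * Real.sqrt 2 < 0 →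
        (j : ℝ) - (k : ℝ) * Real.sqrt 2 ∈ addPlus (α : Set ℝ)) := by
  intro H
  -- `-1` is inserted so that `M` is defined, and negative, also for `α = ∅`
  set M := (insert (-1) α).max' (Finset.insert_nonempty _ _)
  have hM : M < 0 := (Finset.max'_lt_iff _ _).2 fun x hx ↦ by
    rcases Finset.mem_insert.1 hx with rfl | hx
    exacts [neg_one_lt_zero, hα x hx]
  have hαM : ∀ x ∈ (α : Set ℝ), x ≤ M := fun x hx ↦
    Finset.le_max' _ _ (Finset.mem_insert_of_mem hx)
  obtain ⟨j, k, hlo, hhi⟩ :=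
    irrational_sqrt_two.exists_nat_sub_nat_mul_mem_Ioo (by positivity) (neg_pos.2 hM)
  have : (j : ℝ) - k * Real.sqrt 2 ≤ M := addPlus_subset_Iic hαM hM.le (H j k hhi)
  linarith
end
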